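/- arXiv:2412.08512 — 2 statements merged into one kernel-verified Lean document; each statement's English description precedes it below -/
import Mathlib

section
/- Let q = p^e with p prime, let 0 ≤ k < e, and let A = F_q[X_1,…,X_ℓ]/⟨t_1(X_1),…,t_ℓ(X_ℓ)⟩ where each t_i(X_i) is a square-free polynomial in F_q[X_i]. Let λ be a unit of A satisfying λ^{p^e} = λ and λ^{1+p^{e−k}} = 1. If C is a λ-constacyclic code of length n over A, then both C^{⊥k} and the k-Galois hull hull_k(C) = C ∩ C^{⊥k} are λ-constacyclic codes of length n over A. -/
/-!
In characteristic `p` the map `x ↦ x ^ p ^ k` is a ring endomorphism `σ` of `A`, so the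
`k`-Galois dual is the dual for the `σ`-sesquilinear form `∑ i, c i * σ (v i)` and hence a
submodule. The hypotheses on `λ` give `λ * σ λ = 1`, which makes this form invariant under the
`λ`-constacyclic shift. The `n`-th power of the shift is multiplication by the unit `λ`, so the
shift maps `C` onto itself, and invariance of the form carries shift-invariance from `C` to its
dual; the hull is then an intersection of two shift-invariant submodules.
-/

set_option synthInstance.maxHeartbeats 1000000
set_option maxHeartbeats 1000000

/-- The `k`-Galois dual (as a set) of a set of codewords `C ⊆ R^ι`,
with respect to the inner product `⟨u,v⟩ = ∑ i, u i * (v i)^pk`. -/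
def galoisDualSet {R : Type*} [CommRing R] {ι : Type*} [Fintype ι]
    (pk : ℕ) (C : Set (ι → R)) : Set (ι → R) :=
  {v | ∀ c ∈ C, ∑ i, c i * v i ^ pk = 0}

/-- The `μ`-constacyclic shift `(c_0, …, c_{n-1}) ↦ (μ c_{n-1}, c_0, …, c_{n-2})`
on `R^n`, with coordinates indexed by `ZMod n`. -/
def constaShift {R : Type*} [CommRing R] {n : ℕ} (μ : R) (c : ZMod n → R) :
    ZMod n → R :=
  fun i => if i = 0 then μ * c (i - 1) else c (i - 1)

/-- The affine algebra `F[X_1, …, X_ℓ] / ⟨t_1(X_1), …, t_ℓ(X_ℓ)⟩`. -/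
abbrev AffineAlgebra {F : Type*} [Field F] {ℓ : ℕ} (t : Fin ℓ → Polynomial F) : Type _ :=
  MvPolynomial (Fin ℓ) F ⧸
    Ideal.span (Set.range fun i =>
      Polynomial.aeval (MvPolynomial.X i : MvPolynomial (Fin ℓ) F) (t i))

open Function

section ConstaShift

variable {R : Type*} [CommRing R] {n : ℕ} [NeZero n]

lemma ZMod.val_sub_one_eq_ite (i : ZMod n) :
    (i - 1).val = if i = 0 then n - 1 else i.val - 1 := by
  obtain ⟨N, rfl⟩ := Nat.exists_eq_succ_of_ne_zero (NeZero.ne n)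
  exact Fin.coe_sub_one i

lemma constaShift_iterate_apply (μ : R) (x : ZMod n → R) {m : ℕ} (hm : m ≤ n) (i : ZMod n) :
    (constaShift μ)^[m] x i = if i.val < m then μ * x (i - m) else x (i - m) := by
  induction m generalizing i with
  | zero => simp
  | succ m ih =>
    have hshift : i - 1 - m = i - (m + 1 : ℕ) := by push_cast; ring
    rw [iterate_succ_apply', constaShift, ih (by omega), hshift, ZMod.val_sub_one_eq_ite]
    by_cases hi : i = 0
    · rw [if_pos hi, if_pos hi, if_neg (by omega), hi, ZMod.val_zero, if_pos m.succ_pos]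
    · have hval : i.val ≠ 0 := (ZMod.val_ne_zero i).mpr hi
      simp only [if_neg hi]
      split_ifs <;> first | rfl | omega

lemma constaShift_iterate_self (μ : R) (x : ZMod n → R) : (constaShift μ)^[n] x = μ • x := by
  funext i
  simp [constaShift_iterate_apply μ x le_rfl i, ZMod.val_lt i]

lemma surjOn_constaShift (u : Rˣ) {C : Submodule R (ZMod n → R)}
    (hC : Set.MapsTo (constaShift (u : R)) (C : Set (ZMod n → R)) C) :
    Set.SurjOn (constaShift (u : R)) (C : Set (ZMod n → R)) C := by
  intro c hc
  refine ⟨(constaShift (u : R))^[n - 1] (u⁻¹ • c), hC.iterate _ (C.smul_mem _ hc), ?_⟩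
  rw [← iterate_succ_apply' (constaShift (u : R)), Nat.succ_eq_add_one,
    Nat.sub_one_add_one (NeZero.ne n), constaShift_iterate_self, ← Units.smul_def, smul_inv_smul]

end ConstaShift

section TwistedDual

variable {R : Type*} [CommRing R]

def twistedDual {ι : Type*} [Fintype ι] (σ : R →+* R) (C : Set (ι → R)) :
    Submodule R (ι → R) where
  carrier := {v | ∀ c ∈ C, ∑ i, c i * σ (v i) = 0}
  add_mem' {u v} hu hv c hc := by
    simp only [Pi.add_apply, map_add, mul_add, Finset.sum_add_distrib, hu c hc, hv c hc, add_zero]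
  zero_mem' c _ := by simp
  smul_mem' a v hv c hc := by
    simp only [Pi.smul_apply, smul_eq_mul, map_mul, mul_left_comm (c _), ← Finset.mul_sum,
      hv c hc, mul_zero]

lemma mem_twistedDual {ι : Type*} [Fintype ι] {σ : R →+* R} {C : Set (ι → R)} {v : ι → R} :
    v ∈ twistedDual σ C ↔ ∀ c ∈ C, ∑ i, c i * σ (v i) = 0 :=
  Iff.rfl

lemma coe_twistedDual_eq_galoisDualSet {ι : Type*} [Fintype ι] {σ : R →+* R} {pk : ℕ}
    (hσ : ∀ x, σ x = x ^ pk) (C : Set (ι → R)) :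
    (twistedDual σ C : Set (ι → R)) = galoisDualSet pk C := by
  ext v
  simp only [SetLike.mem_coe, mem_twistedDual, hσ]
  rfl

variable {n : ℕ} [NeZero n] {σ : R →+* R}

lemma sum_constaShift_mul_map_constaShift {μ : R} (hμ : μ * σ μ = 1) (c v : ZMod n → R) :
    ∑ i, constaShift μ c i * σ (constaShift μ v i) = ∑ i, c i * σ (v i) := by
  calc ∑ i, constaShift μ c i * σ (constaShift μ v i) = ∑ i, c (i - 1) * σ (v (i - 1)) := by
        refine Finset.sum_congr rfl fun i _ => ?_
        by_cases hi : i = 0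
        · rw [constaShift, constaShift, if_pos hi, if_pos hi, map_mul,
            mul_mul_mul_comm, hμ, one_mul]
        · rw [constaShift, constaShift, if_neg hi, if_neg hi]
    _ = ∑ i, c i * σ (v i) := Fintype.sum_equiv (Equiv.subRight 1) _ _ fun _ => rfl

lemma mapsTo_constaShift_twistedDual (u : Rˣ) (hu : (u : R) * σ u = 1)
    {C : Submodule R (ZMod n → R)}
    (hC : Set.MapsTo (constaShift (u : R)) (C : Set (ZMod n → R)) C) :
    Set.MapsTo (constaShift (u : R)) (twistedDual σ (C : Set (ZMod n → R)) : Set (ZMod n → R))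
      (twistedDual σ (C : Set (ZMod n → R))) := by
  intro v hv c hc
  obtain ⟨c, hc', rfl⟩ := surjOn_constaShift u hC hc
  rw [sum_constaShift_mul_map_constaShift hu]
  exact hv c hc'

end TwistedDual

lemma exists_ringHom_eq_pow_prime_pow (F : Type*) {A : Type*} [Field F] [CommRing A]
    [Algebra F A] (p : ℕ) [Fact p.Prime] [CharP F p] (k : ℕ) :
    ∃ σ : A →+* A, ∀ x, σ x = x ^ p ^ k := by
  rcases subsingleton_or_nontrivial A with _ | _
  -- the zero ring has no characteristic `p`, but every self-map of it is the Frobenius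
  · exact ⟨RingHom.id A, fun _ => Subsingleton.elim _ _⟩
  · have : CharP A p := charP_of_injective_algebraMap' F p
    exact ⟨iterateFrobenius A p k, iterateFrobenius_def p k⟩

lemma mul_pow_prime_pow_eq_one {M : Type*} [Monoid M] {x : M} {p e k : ℕ} (hk : k ≤ e)
    (hfix : x ^ p ^ e = x) (hord : x ^ (1 + p ^ (e - k)) = 1) : x * x ^ p ^ k = 1 := by
  calc x * x ^ p ^ k = x ^ ((1 + p ^ (e - k)) * p ^ k) := by
        rw [add_mul, one_mul, ← pow_add, Nat.sub_add_cancel hk, pow_add, hfix]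
        exact (Commute.self_pow x _).eq
    _ = 1 := by rw [pow_mul, hord, one_pow]

theorem stmt1_general {p e k ℓ n : ℕ} (hp : p.Prime) (hk : k < e) [NeZero n]
    {F : Type*} [Field F] [Fintype F] (hcard : Fintype.card F = p ^ e)
    (t : Fin ℓ → Polynomial F)
    (lam : (AffineAlgebra t)ˣ) (hlam : (lam : AffineAlgebra t) ^ p ^ e = lam)
    (hord : (lam : AffineAlgebra t) ^ (1 + p ^ (e - k)) = 1)
    (C : Submodule (AffineAlgebra t) (ZMod n → AffineAlgebra t))
    (hC : ∀ c ∈ C, constaShift (lam : AffineAlgebra t) c ∈ C) :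
    (∃ D : Submodule (AffineAlgebra t) (ZMod n → AffineAlgebra t),
        (D : Set (ZMod n → AffineAlgebra t)) =
            galoisDualSet (p ^ k) (C : Set (ZMod n → AffineAlgebra t)) ∧
          ∀ x ∈ D, constaShift (lam : AffineAlgebra t) x ∈ D) ∧
      ∃ H : Submodule (AffineAlgebra t) (ZMod n → AffineAlgebra t),
        (H : Set (ZMod n → AffineAlgebra t)) =
            (C : Set (ZMod n → AffineAlgebra t)) ∩
              galoisDualSet (p ^ k) (C : Set (ZMod n → AffineAlgebra t)) ∧
          ∀ x ∈ H, constaShift (lam : AffineAlgebra t) x ∈ H := by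
  have : Fact p.Prime := ⟨hp⟩
  have : CharP F p := charP_of_card_eq_prime_pow hcard
  obtain ⟨σ, hσ⟩ := exists_ringHom_eq_pow_prime_pow F (A := AffineAlgebra t) p k
  have hlamσ : (lam : AffineAlgebra t) * σ lam = 1 := by
    rw [hσ]
    exact mul_pow_prime_pow_eq_one hk.le hlam hord
  let D := twistedDual σ (C : Set (ZMod n → AffineAlgebra t))
  have hD : (D : Set (ZMod n → AffineAlgebra t)) = galoisDualSet (p ^ k) C :=
    coe_twistedDual_eq_galoisDualSet hσ _
  have hDshift : ∀ x ∈ D, constaShift (lam : AffineAlgebra t) x ∈ D :=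
    mapsTo_constaShift_twistedDual lam hlamσ hC
  refine ⟨⟨D, hD, hDshift⟩, C ⊓ D, by rw [Submodule.coe_inf, hD], ?_⟩
  exact fun x hx => ⟨hC x hx.1, hDshift x hx.2⟩

theorem stmt1 {p e k ℓ n : ℕ} (hp : p.Prime) (he : 0 < e) (hk : k < e) [NeZero n]
    {F : Type*} [Field F] [Fintype F] (hcard : Fintype.card F = p ^ e)
    (t : Fin ℓ → Polynomial F) (ht : ∀ i, Squarefree (t i))
    (lam : (AffineAlgebra t)ˣ) (hlam : (lam : AffineAlgebra t) ^ p ^ e = lam)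
    (hord : (lam : AffineAlgebra t) ^ (1 + p ^ (e - k)) = 1)
    (C : Submodule (AffineAlgebra t) (ZMod n → AffineAlgebra t))
    (hC : ∀ c ∈ C, constaShift (lam : AffineAlgebra t) c ∈ C) :
    (∃ D : Submodule (AffineAlgebra t) (ZMod n → AffineAlgebra t),
        (D : Set (ZMod n → AffineAlgebra t)) =
            galoisDualSet (p ^ k) (C : Set (ZMod n → AffineAlgebra t)) ∧
          ∀ x ∈ D, constaShift (lam : AffineAlgebra t) x ∈ D) ∧
      ∃ H : Submodule (AffineAlgebra t) (ZMod n → AffineAlgebra t),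
        (H : Set (ZMod n → AffineAlgebra t)) =
            (C : Set (ZMod n → AffineAlgebra t)) ∩
              galoisDualSet (p ^ k) (C : Set (ZMod n → AffineAlgebra t)) ∧
          ∀ x ∈ H, constaShift (lam : AffineAlgebra t) x ∈ H :=
  stmt1_general hp hk hcard t lam hlam hord C hC
end

section
/- Let q = p^e with p prime, 0 ≤ k < e, and let R = F_q^N be the product ring with componentwise operations. Let C ⊆ R^n be an R-submodule, and for each S ∈ {1,…,N} let C_S = π_S(C) where π_S : R^n → F_q^n takes the S-th component in every coordinate. Then C is k-Galois LCD over R (i.e. C ∩ C^{⊥k,R} = {0}) if and only if for every S, the linear code C_S ⊆ F_q^n is k-Galois LCD (i.e. C_S ∩ (C_S)^{⊥k} = {0}). -/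
section GaloisDualPi

variable {σ ι : Type*} {A : σ → Type*} [∀ S, CommRing (A S)]

theorem zero_mem_galoisDualSet [Fintype ι] {R : Type*} [CommRing R] {pk : ℕ} (hpk : pk ≠ 0)
    (C : Set (ι → R)) : 0 ∈ galoisDualSet pk C := fun c _ => by
  simp [zero_pow hpk]

def piProj (S : σ) (ρ : ι → ∀ T, A T) : ι → A S := fun i => ρ i S

@[simp]
theorem piProj_zero (S : σ) : piProj S (0 : ι → ∀ T, A T) = 0 := rfl

theorem mem_galoisDualSet_pi_iff [Fintype ι] {pk : ℕ} (C : Set (ι → ∀ S, A S))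
    (v : ι → ∀ S, A S) :
    v ∈ galoisDualSet pk C ↔ ∀ S, piProj S v ∈ galoisDualSet pk (piProj S '' C) := by
  constructor
  · rintro hv S _ ⟨c, hc, rfl⟩
    simpa [piProj] using congrFun (hv c hc) S
  · intro hv c hc
    funext S
    simpa [piProj] using hv S (piProj S c) ⟨c, hc, rfl⟩

variable [DecidableEq σ]

@[simp]
theorem piProj_single_smul_self (S : σ) (c : ι → ∀ S, A S) :
    piProj S ((Pi.single S 1 : ∀ S, A S) • c) = piProj S c := by
  funext i
  simp [piProj]

theorem piProj_single_smul_of_ne {S T : σ} (h : T ≠ S) (c : ι → ∀ S, A S) :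
    piProj T ((Pi.single S 1 : ∀ S, A S) • c) = 0 := by
  funext i
  simp [piProj, h]

theorem single_smul_mem_galoisDualSet [Fintype ι] {pk : ℕ} (hpk : pk ≠ 0)
    (C : Set (ι → ∀ S, A S)) {S : σ} {c : ι → ∀ S, A S}
    (hc : piProj S c ∈ galoisDualSet pk (piProj S '' C)) :
    (Pi.single S 1 : ∀ S, A S) • c ∈ galoisDualSet pk C := by
  rw [mem_galoisDualSet_pi_iff]
  intro T
  by_cases h : T = S
  · subst h
    simpa using hc
  · rw [piProj_single_smul_of_ne h]
    exact zero_mem_galoisDualSet hpk _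

omit [DecidableEq σ] in
theorem inter_galoisDualSet_eq_zero_iff_forall_piProj [Fintype ι] {pk : ℕ} (hpk : pk ≠ 0)
    (C : Submodule (∀ S, A S) (ι → ∀ S, A S)) :
    (C : Set (ι → ∀ S, A S)) ∩ galoisDualSet pk C = {0} ↔
      ∀ S, piProj S '' (C : Set (ι → ∀ S, A S)) ∩ galoisDualSet pk (piProj S '' C) = {0} := by
  classical
  simp only [Set.eq_singleton_iff_unique_mem, Set.mem_inter_iff, SetLike.mem_coe]
  refine ⟨fun ⟨_, hC⟩ S => ⟨⟨⟨0, C.zero_mem, rfl⟩, zero_mem_galoisDualSet hpk _⟩, ?_⟩,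
    fun hC => ⟨⟨C.zero_mem, zero_mem_galoisDualSet hpk _⟩, ?_⟩⟩
  · rintro _ ⟨⟨c, hc, rfl⟩, hdual⟩
    have hlift := hC _ ⟨C.smul_mem _ hc, single_smul_mem_galoisDualSet hpk _ hdual⟩
    simpa using congrArg (piProj S) hlift
  · rintro ρ ⟨hρ, hdual⟩
    funext i S
    exact congrFun ((hC S).2 _ ⟨⟨ρ, hρ, rfl⟩, (mem_galoisDualSet_pi_iff _ ρ).1 hdual S⟩) i

end GaloisDualPi

theorem stmt11_general {p k N n : ℕ} (hp : p.Prime)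
    {F : Type*} [Field F]
    (C : Submodule (Fin N → F) (Fin n → Fin N → F)) :
    (C : Set (Fin n → Fin N → F)) ∩
          galoisDualSet (p ^ k) (C : Set (Fin n → Fin N → F)) =
        {0} ↔
      ∀ S : Fin N,
        ((fun ρ : Fin n → Fin N → F => fun i => ρ i S) ''
              (C : Set (Fin n → Fin N → F))) ∩
            galoisDualSet (p ^ k)
              ((fun ρ : Fin n → Fin N → F => fun i => ρ i S) ''
                (C : Set (Fin n → Fin N → F))) =
          {0} := by
  exact inter_galoisDualSet_eq_zero_iff_forall_piProj (pow_ne_zero k hp.ne_zero) C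

theorem stmt11 {p e k N n : ℕ} (hp : p.Prime) (he : 0 < e) (hk : k < e)
    {F : Type*} [Field F] [Fintype F] (hcard : Fintype.card F = p ^ e)
    (C : Submodule (Fin N → F) (Fin n → Fin N → F)) :
    (C : Set (Fin n → Fin N → F)) ∩
          galoisDualSet (p ^ k) (C : Set (Fin n → Fin N → F)) =
        {0} ↔
      ∀ S : Fin N,
        ((fun ρ : Fin n → Fin N → F => fun i => ρ i S) ''
              (C : Set (Fin n → Fin N → F))) ∩
            galoisDualSet (p ^ k)
              ((fun ρ : Fin n → Fin N → F => fun i => ρ i S) ''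
                (C : Set (Fin n → Fin N → F))) =
          {0} :=
  stmt11_general hp C
end
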